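/- For the system of coalescing random walks dual to the discrete-time voter model on a finite connected graph G, the geometric decay rate of the full coalescence time σ equals the maximum over pairs of distinct vertices of the decay rates of the pairwise meeting times: λ_CRW(G) = lim_{n→∞} (max_{v≠v'} P(σ_{v,v'} > n))^{1/n}, where σ_{v,v'} is the first meeting time of the walkers started at v and v'. -/

import Mathlib

open Filter Topology Matrix

variable {V : Type*} [Fintype V] [DecidableEq V]

/-- Transition matrix of the system of coalescing lazy random walks on `G`: a state is
a map `f : V → V` recording the position of the walker started at each vertex; a uniform
vertex `v` and uniform neighbor `u` are chosen and all walkers at `v` move to `u`. -/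
noncomputable def crwMatrix (G : SimpleGraph V) [DecidableRel G.Adj] :
    Matrix (V → V) (V → V) ℝ := fun f g =>
  (1 / (Fintype.card V : ℝ)) * ∑ v : V, ∑ u ∈ G.neighborFinset v,
    (1 / (G.degree v : ℝ)) *
      (if g = (fun w => if f w = v then u else f w) then 1 else 0)

/-- `P(σ > n)`: probability that the coalescing random walks started from one walker at
each vertex have not fully coalesced by time `n`. -/
noncomputable def crwSurvival (G : SimpleGraph V) [DecidableRel G.Adj] (n : ℕ) : ℝ :=
  ∑ g : V → V, if ∀ v w : V, g v = g w then 0 else ((crwMatrix G) ^ n) id g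

/-- `P(σ_{v,v'} > n)`: probability that the walkers started at `v` and `v'` have not
met by time `n`. -/
noncomputable def crwPairSurvival (G : SimpleGraph V) [DecidableRel G.Adj]
    (v v' : V) (n : ℕ) : ℝ :=
  ∑ g : V → V, if g v = g v' then 0 else ((crwMatrix G) ^ n) id g

/-!
The event `σ > n` contains each event `σ_{v,v'} > n` and is, by the union bound, of
probability at most the sum of their probabilities. So `P(σ > n)` lies between
`S n := max_{v ≠ v'} P(σ_{v,v'} > n)` and `N * S n`, where `N` is the number of pairs,
and a constant factor disappears under `n`-th roots.
-/

theorem Filter.Tendsto.rpow_one_div_of_le_of_le_const_mul {a b : ℕ → ℝ} {C l : ℝ}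
    (hC : 0 < C) (ha : ∀ n, 0 ≤ a n) (hab : ∀ n, a n ≤ b n) (hba : ∀ n, b n ≤ C * a n)
    (hb : Tendsto (fun n : ℕ => b n ^ ((1 : ℝ) / n)) atTop (𝓝 l)) :
    Tendsto (fun n : ℕ => a n ^ ((1 : ℝ) / n)) atTop (𝓝 l) := by
  have hC_root : Tendsto (fun n : ℕ => C ^ ((1 : ℝ) / n)) atTop (𝓝 1) := by
    simpa [Function.comp_def] using ((Real.continuousAt_const_rpow hC.ne').tendsto).comp
      tendsto_one_div_atTop_nhds_zero_nat
  have hlower : Tendsto (fun n : ℕ => b n ^ ((1 : ℝ) / n) / C ^ ((1 : ℝ) / n))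
      atTop (𝓝 l) := by
    simpa only [div_one, Pi.div_def] using hb.div hC_root one_ne_zero
  refine tendsto_of_tendsto_of_tendsto_of_le_of_le hlower hb (fun n => ?_) (fun n => ?_)
  · rw [div_le_iff₀ (Real.rpow_pos_of_pos hC _), mul_comm,
      ← Real.mul_rpow hC.le (ha n)]
    exact Real.rpow_le_rpow ((ha n).trans (hab n)) (hba n) (by positivity)
  · exact Real.rpow_le_rpow (ha n) (hab n) (by positivity)

section CoalescingRandomWalk

variable (G : SimpleGraph V) [DecidableRel G.Adj]

lemma crwMatrix_nonneg (f g : V → V) : 0 ≤ crwMatrix G f g := by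
  unfold crwMatrix
  refine mul_nonneg (by positivity) (Finset.sum_nonneg fun v _ =>
    Finset.sum_nonneg fun u _ => mul_nonneg (by positivity) ?_)
  split_ifs <;> norm_num

lemma crwMatrix_pow_nonneg (n : ℕ) (f g : V → V) : 0 ≤ (crwMatrix G ^ n) f g := by
  induction n generalizing g with
  | zero => simp only [pow_zero, one_apply]; split_ifs <;> norm_num
  | succ n ih =>
    rw [pow_succ, mul_apply]
    exact Finset.sum_nonneg fun h _ => mul_nonneg (ih h) (crwMatrix_nonneg G h g)

lemma crwSurvival_nonneg (n : ℕ) : 0 ≤ crwSurvival G n :=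
  Finset.sum_nonneg fun g _ => ite_nonneg le_rfl (crwMatrix_pow_nonneg G n id g)

lemma crwPairSurvival_nonneg (v v' : V) (n : ℕ) : 0 ≤ crwPairSurvival G v v' n :=
  Finset.sum_nonneg fun g _ => ite_nonneg le_rfl (crwMatrix_pow_nonneg G n id g)

lemma crwPairSurvival_le_crwSurvival (v v' : V) (n : ℕ) :
    crwPairSurvival G v v' n ≤ crwSurvival G n :=
  Finset.sum_le_sum fun g _ => by
    by_cases hg : g v = g v'
    · rw [if_pos hg]
      exact ite_nonneg le_rfl (crwMatrix_pow_nonneg G n id g)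
    · rw [if_neg hg, if_neg fun hall => hg (hall v v')]

lemma crwSurvival_le_sum_crwPairSurvival (n : ℕ) :
    crwSurvival G n ≤ ∑ p : {p : V × V // p.1 ≠ p.2}, crwPairSurvival G p.1.1 p.1.2 n := by
  unfold crwSurvival crwPairSurvival
  rw [Finset.sum_comm]
  refine Finset.sum_le_sum fun g _ => ?_
  have hterm_nonneg (p : {p : V × V // p.1 ≠ p.2}) :
      0 ≤ if g p.1.1 = g p.1.2 then 0 else (crwMatrix G ^ n) id g :=
    ite_nonneg le_rfl (crwMatrix_pow_nonneg G n id g)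
  by_cases hconst : ∀ v w : V, g v = g w
  · rw [if_pos hconst]
    exact Finset.sum_nonneg fun p _ => hterm_nonneg p
  · rw [if_neg hconst]
    simp only [not_forall] at hconst
    obtain ⟨v, w, hvw⟩ := hconst
    let p : {p : V × V // p.1 ≠ p.2} := ⟨(v, w), fun h => hvw (congrArg g h)⟩
    simpa [p, hvw] using
      Finset.single_le_sum (fun p _ => hterm_nonneg p) (Finset.mem_univ p)

end CoalescingRandomWalk

theorem crw_rate_eq_max_pairwise_rate (G : SimpleGraph V) [DecidableRel G.Adj]
    (lamCRW : ℝ)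
    (hC : Tendsto (fun n : ℕ => crwSurvival G n ^ ((1 : ℝ) / n)) atTop (𝓝 lamCRW)) :
    Tendsto (fun n : ℕ =>
        (⨆ p : {p : V × V // p.1 ≠ p.2}, crwPairSurvival G p.1.1 p.1.2 n) ^ ((1 : ℝ) / n))
      atTop (𝓝 lamCRW) := by
  set S : ℕ → ℝ := fun n => ⨆ p : {p : V × V // p.1 ≠ p.2}, crwPairSurvival G p.1.1 p.1.2 n
  have hS_nonneg (n : ℕ) : 0 ≤ S n :=
    Real.iSup_nonneg fun p => crwPairSurvival_nonneg G _ _ n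
  have hpair_le_S (n : ℕ) (p : {p : V × V // p.1 ≠ p.2}) :
      crwPairSurvival G p.1.1 p.1.2 n ≤ S n :=
    le_ciSup (f := fun p : {p : V × V // p.1 ≠ p.2} => crwPairSurvival G p.1.1 p.1.2 n)
      (Set.finite_range _).bddAbove p
  -- The constant is `N + 1` for the number `N` of pairs, so that it is positive even if `N = 0`.
  refine hC.rpow_one_div_of_le_of_le_const_mul
    (C := Fintype.card {p : V × V // p.1 ≠ p.2} + 1) (by positivity) hS_nonneg
    (fun n => Real.iSup_le (fun p => crwPairSurvival_le_crwSurvival G _ _ n)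
      (crwSurvival_nonneg G n))
    (fun n => ?_)
  calc crwSurvival G n
      ≤ ∑ p : {p : V × V // p.1 ≠ p.2}, crwPairSurvival G p.1.1 p.1.2 n :=
        crwSurvival_le_sum_crwPairSurvival G n
    _ ≤ Fintype.card {p : V × V // p.1 ≠ p.2} * S n := by
        simpa only [Finset.card_univ, nsmul_eq_mul] using
          Finset.sum_le_card_nsmul Finset.univ _ _ fun p _ => hpair_le_S n p
    _ ≤ (Fintype.card {p : V × V // p.1 ≠ p.2} + 1) * S n := by nlinarith [hS_nonneg n]
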